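/- Stabilizer of a D-curve: if (A,B) ∈ SL(2,ℂ) × SL(2,ℂ) and there exists λ ∈ ℂˣ with σ_{A,B}(x₀³y₁³ + x₁³y₀³) = λ·(x₀³y₁³ + x₁³y₀³), then A and B are both diagonal or both antidiagonal, i.e. (A,B) lies in the subgroup S. -/
import Mathlib


open Matrix

abbrev SL2 := Matrix.SpecialLinearGroup (Fin 2) ℂ

/-- The subgroup `S` of `SL(2,ℂ) × SL(2,ℂ)` consisting of the pairs `(A,B)` with `A`
and `B` both diagonal or both antidiagonal. -/
def Ssub : Subgroup (SL2 × SL2) where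
  carrier := {p |
    ((p.1 : Matrix (Fin 2) (Fin 2) ℂ) 0 1 = 0 ∧ (p.1 : Matrix (Fin 2) (Fin 2) ℂ) 1 0 = 0 ∧
     (p.2 : Matrix (Fin 2) (Fin 2) ℂ) 0 1 = 0 ∧ (p.2 : Matrix (Fin 2) (Fin 2) ℂ) 1 0 = 0) ∨
    ((p.1 : Matrix (Fin 2) (Fin 2) ℂ) 0 0 = 0 ∧ (p.1 : Matrix (Fin 2) (Fin 2) ℂ) 1 1 = 0 ∧
     (p.2 : Matrix (Fin 2) (Fin 2) ℂ) 0 0 = 0 ∧ (p.2 : Matrix (Fin 2) (Fin 2) ℂ) 1 1 = 0)}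
  one_mem' := by
    left
    simp [Matrix.SpecialLinearGroup.coe_one, Matrix.one_apply]
  mul_mem' := by
    intro a b ha hb
    rcases ha with ⟨h1, h2, h3, h4⟩ | ⟨h1, h2, h3, h4⟩ <;>
      rcases hb with ⟨g1, g2, g3, g4⟩ | ⟨g1, g2, g3, g4⟩
    · left
      refine ⟨?_, ?_, ?_, ?_⟩ <;>
        simp [Prod.fst_mul, Prod.snd_mul, Matrix.mul_apply, Fin.sum_univ_two,
          h1, h2, h3, h4, g1, g2, g3, g4]
    · right
      refine ⟨?_, ?_, ?_, ?_⟩ <;>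
        simp [Prod.fst_mul, Prod.snd_mul, Matrix.mul_apply, Fin.sum_univ_two,
          h1, h2, h3, h4, g1, g2, g3, g4]
    · right
      refine ⟨?_, ?_, ?_, ?_⟩ <;>
        simp [Prod.fst_mul, Prod.snd_mul, Matrix.mul_apply, Fin.sum_univ_two,
          h1, h2, h3, h4, g1, g2, g3, g4]
    · left
      refine ⟨?_, ?_, ?_, ?_⟩ <;>
        simp [Prod.fst_mul, Prod.snd_mul, Matrix.mul_apply, Fin.sum_univ_two,
          h1, h2, h3, h4, g1, g2, g3, g4]
  inv_mem' := by
    intro a ha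
    rcases ha with ⟨h1, h2, h3, h4⟩ | ⟨h1, h2, h3, h4⟩
    · left
      refine ⟨?_, ?_, ?_, ?_⟩ <;>
        simp [Prod.fst_inv, Prod.snd_inv, Matrix.SpecialLinearGroup.coe_inv,
          Matrix.adjugate_fin_two, h1, h2, h3, h4]
    · right
      refine ⟨?_, ?_, ?_, ?_⟩ <;>
        simp [Prod.fst_inv, Prod.snd_inv, Matrix.SpecialLinearGroup.coe_inv,
          Matrix.adjugate_fin_two, h1, h2, h3, h4]

open MvPolynomial

/-- The ℂ-algebra endomorphism `σ_{A,B}` of `ℂ[x₀,x₁,y₀,y₁]`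
(variables `X 0 = x₀`, `X 1 = x₁`, `X 2 = y₀`, `X 3 = y₁`) determined by
`x₀ ↦ A₀₀x₀ + A₀₁x₁`, `x₁ ↦ A₁₀x₀ + A₁₁x₁`, `y₀ ↦ B₀₀y₀ + B₀₁y₁`,
`y₁ ↦ B₁₀y₀ + B₁₁y₁`. -/
noncomputable def sigmaAB (A B : SL2) :
    MvPolynomial (Fin 4) ℂ →ₐ[ℂ] MvPolynomial (Fin 4) ℂ :=
  aeval ![C ((A : Matrix (Fin 2) (Fin 2) ℂ) 0 0) * X 0
            + C ((A : Matrix (Fin 2) (Fin 2) ℂ) 0 1) * X 1,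
          C ((A : Matrix (Fin 2) (Fin 2) ℂ) 1 0) * X 0
            + C ((A : Matrix (Fin 2) (Fin 2) ℂ) 1 1) * X 1,
          C ((B : Matrix (Fin 2) (Fin 2) ℂ) 0 0) * X 2
            + C ((B : Matrix (Fin 2) (Fin 2) ℂ) 0 1) * X 3,
          C ((B : Matrix (Fin 2) (Fin 2) ℂ) 1 0) * X 2
            + C ((B : Matrix (Fin 2) (Fin 2) ℂ) 1 1) * X 3]


lemma key_scalar (a b c d p q r s l : ℂ) (hl : l ≠ 0)
    (hA : a*d - b*c = 1) (hB : p*s - q*r = 1)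
    (H : ∀ x0 x1 y0 y1 : ℂ,
      (a*x0+b*x1)^3*(r*y0+s*y1)^3 + (c*x0+d*x1)^3*(p*y0+q*y1)^3
        = l*(x0^3*y1^3 + x1^3*y0^3)) :
    (b = 0 ∧ c = 0 ∧ q = 0 ∧ r = 0) ∨ (a = 0 ∧ d = 0 ∧ p = 0 ∧ s = 0) := by
  have E00 : a^0*b^3*r^0*s^3 + c^0*d^3*p^0*q^3 = 0 := by
    linear_combination (1 : ℂ) * H 0 1 0 1
  have E02 : a^0*b^3*r^2*s^1 + c^0*d^3*p^2*q^1 = 0 := by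
    linear_combination ((-1/3) : ℂ) * H 0 1 0 1 + ((1/6) : ℂ) * H 0 1 1 1 + ((-1/6) : ℂ) * H 0 1 1 (-1)
  have E03 : a^0*b^3*r^3*s^0 + c^0*d^3*p^3*q^0 = l := by
    linear_combination (1 : ℂ) * H 0 1 1 0
  have E10 : a^1*b^2*r^0*s^3 + c^1*d^2*p^0*q^3 = 0 := by
    linear_combination ((-1/3) : ℂ) * H 1 0 0 1 + ((1/6) : ℂ) * H 1 1 0 1 + ((1/6) : ℂ) * H 1 (-1) 0 1
  have E13 : a^1*b^2*r^3*s^0 + c^1*d^2*p^3*q^0 = 0 := by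
    linear_combination ((-1/3) : ℂ) * H 1 0 1 0 + ((1/6) : ℂ) * H 1 1 1 0 + ((1/6) : ℂ) * H 1 (-1) 1 0
  have E20 : a^2*b^1*r^0*s^3 + c^2*d^1*p^0*q^3 = 0 := by
    linear_combination ((-1/3) : ℂ) * H 0 1 0 1 + ((1/6) : ℂ) * H 1 1 0 1 + ((-1/6) : ℂ) * H 1 (-1) 0 1
  have E23 : a^2*b^1*r^3*s^0 + c^2*d^1*p^3*q^0 = 0 := by
    linear_combination ((-1/3) : ℂ) * H 0 1 1 0 + ((1/6) : ℂ) * H 1 1 1 0 + ((-1/6) : ℂ) * H 1 (-1) 1 0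
  have E30 : a^3*b^0*r^0*s^3 + c^3*d^0*p^0*q^3 = l := by
    linear_combination (1 : ℂ) * H 1 0 0 1
  have E31 : a^3*b^0*r^1*s^2 + c^3*d^0*p^1*q^2 = 0 := by
    linear_combination ((-1/3) : ℂ) * H 1 0 1 0 + ((1/6) : ℂ) * H 1 0 1 1 + ((1/6) : ℂ) * H 1 0 1 (-1)
  have E33 : a^3*b^0*r^3*s^0 + c^3*d^0*p^3*q^0 = 0 := by
    linear_combination (1 : ℂ) * H 1 0 1 0
  by_cases ha : a = 0
  · -- antidiagonal case
    right
    have hb : b ≠ 0 := by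
      intro hb; rw [ha, hb] at hA; simp at hA
    have hc : c ≠ 0 := by
      intro hc; rw [ha, hc] at hA; simp at hA
    have hd : d = 0 := by
      by_contra hd
      have hp : p = 0 := by
        have h3 : c*(d^2*p^3) = 0 := by linear_combination E13 - b^2*r^3*ha
        simp [mul_eq_zero, pow_eq_zero_iff, hc, hd] at h3
        exact h3
      have hq : q = 0 := by
        have h3 : c*(d^2*q^3) = 0 := by linear_combination E10 - b^2*s^3*ha
        simp [mul_eq_zero, pow_eq_zero_iff, hc, hd] at h3
        exact h3
      rw [hp, hq] at hB; simp at hB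
    have hq : q ≠ 0 := by
      intro hq
      have h3 : c^3*q^3 = l := by linear_combination E30 - a^2*s^3*ha
      rw [hq] at h3
      exact hl (by linear_combination -h3)
    have hr : r ≠ 0 := by
      intro hr
      have h3 : b^3*r^3 = l := by linear_combination E03 - d^2*p^3*hd
      rw [hr] at h3
      exact hl (by linear_combination -h3)
    have hs : s = 0 := by
      have h3 : b^3*(r^2*s) = 0 := by linear_combination E02 - d^2*p^2*q*hd
      simp [mul_eq_zero, pow_eq_zero_iff, hb, hr] at h3
      exact h3
    have hp : p = 0 := by
      have h3 : c^3*(p*q^2) = 0 := by linear_combination E31 - a^2*r*s^2*ha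
      simp [mul_eq_zero, pow_eq_zero_iff, hc, hq] at h3
      exact h3
    exact ⟨ha, hd, hp, hs⟩
  · -- diagonal case
    left
    have hcd : c*d = 0 := by
      by_cases hp : p = 0
      · have hq : q ≠ 0 := by
          intro hq; rw [hp, hq] at hB; simp at hB
        have h3 : (c*d)*q^3 = 0 := by linear_combination a*E10 - b*E20 - c*d*q^3*hA
        simp [mul_eq_zero, pow_eq_zero_iff, hq] at h3
        rcases h3 with h | h <;> simp [h]
      · have h3 : (c*d)*p^3 = 0 := by linear_combination a*E13 - b*E23 - c*d*p^3*hA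
        simp [mul_eq_zero, pow_eq_zero_iff, hp] at h3
        rcases h3 with h | h <;> simp [h]
    have hdpal : d^2*p^3 = a*l := by linear_combination a*E03 - b*E13 - d^2*p^3*hA
    have hq : q = 0 := by
      by_contra hq
      have h3 : d^2*q^3 = 0 := by linear_combination a*E00 - b*E10 - d^2*q^3*hA
      have hd0 : d = 0 := by
        simpa [mul_eq_zero, pow_eq_zero_iff, hq] using h3
      rw [hd0] at hdpal
      exact ha (by
        have : a*l = 0 := by linear_combination -hdpal
        rcases mul_eq_zero.1 this with h | h
        · exact h
        · exact absurd h hl)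
    have hps : p*s = 1 := by linear_combination hB + r*hq
    have hp : p ≠ 0 := by
      intro hp; rw [hp] at hps; simp at hps
    have hs : s ≠ 0 := by
      intro hs; rw [hs] at hps; simp at hps
    have hd : d ≠ 0 := by
      intro hd
      rw [hd] at hdpal
      have : a*l = 0 := by linear_combination -hdpal
      rcases mul_eq_zero.1 this with h | h
      · exact ha h
      · exact hl h
    have hc : c = 0 := by
      rcases mul_eq_zero.1 hcd with h | h
      · exact h
      · exact absurd h hd
    have hb : b = 0 := by
      have h3 : a^2*(b*s^3) = 0 := by linear_combination E20 - c*d*q^3*hc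
      simp [mul_eq_zero, pow_eq_zero_iff, ha, hs] at h3
      exact h3
    have hr : r = 0 := by
      have h3 : a^3*r^3 = 0 := by linear_combination E33 - c^2*p^3*hc
      simpa [mul_eq_zero, pow_eq_zero_iff, ha] using h3
    exact ⟨hb, hc, hq, hr⟩

/-- **Stabilizer of a D-curve.** If `(A,B) ∈ SL(2,ℂ) × SL(2,ℂ)` maps the polynomial
`x₀³y₁³ + x₁³y₀³` (a D-curve, union of three distinct `(1,1)`-conics meeting in two
`D₄` singularities) to a nonzero scalar multiple of itself, then `A` and `B` are both
diagonal or both antidiagonal, i.e. `(A,B) ∈ S`. -/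
theorem dCurve_stabilizer (A B : SL2)
    (h : ∃ lam : ℂˣ, sigmaAB A B (X 0 ^ 3 * X 3 ^ 3 + X 1 ^ 3 * X 2 ^ 3)
        = C (lam : ℂ) * (X 0 ^ 3 * X 3 ^ 3 + X 1 ^ 3 * X 2 ^ 3)) :
    (A, B) ∈ Ssub := by
  obtain ⟨lam, h⟩ := h
  set M := (A : Matrix (Fin 2) (Fin 2) ℂ)
  set N := (B : Matrix (Fin 2) (Fin 2) ℂ)
  have hdetA : M 0 0 * M 1 1 - M 0 1 * M 1 0 = 1 := by
    have h2 := A.property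
    rwa [Matrix.det_fin_two] at h2
  have hdetB : N 0 0 * N 1 1 - N 0 1 * N 1 0 = 1 := by
    have h2 := B.property
    rwa [Matrix.det_fin_two] at h2
  have H : ∀ x0 x1 y0 y1 : ℂ,
      (M 0 0*x0 + M 0 1*x1)^3*(N 1 0*y0 + N 1 1*y1)^3
        + (M 1 0*x0 + M 1 1*x1)^3*(N 0 0*y0 + N 0 1*y1)^3
      = (lam : ℂ)*(x0^3*y1^3 + x1^3*y0^3) := by
    intro x0 x1 y0 y1
    have := congrArg (eval ![x0,x1,y0,y1]) h
    simpa [sigmaAB] using this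
  have := key_scalar (M 0 0) (M 0 1) (M 1 0) (M 1 1) (N 0 0) (N 0 1) (N 1 0) (N 1 1)
    (lam : ℂ) lam.ne_zero hdetA hdetB H
  rcases this with ⟨h1, h2, h3, h4⟩ | ⟨h1, h2, h3, h4⟩
  · exact Or.inl ⟨h1, h2, h3, h4⟩
  · exact Or.inr ⟨h1, h2, h3, h4⟩
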